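/- Let k(x,y) be a positive semi-definite symmetric real-valued kernel on a set X. Then for any n ∈ ℕ, the pointwise power k(x,y)^n is also a positive semi-definite symmetric kernel. -/

import Mathlib

/-!
On finitely many points a kernel is positive semi-definite exactly when its Gram matrix is, and the
Gram matrix of `k ^ n` is the `n`-th Hadamard power of that of `k`, which is positive semi-definite
by the Schur product theorem.
-/

open Matrix
open scoped ComplexOrder

namespace Matrix

variable {ι 𝕜 : Type*} [RCLike 𝕜]

theorem PosSemidef.map_pow [Finite ι] {A : Matrix ι ι 𝕜} (hA : A.PosSemidef) (n : ℕ) :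
    (A.map (· ^ n)).PosSemidef := by
  induction n with
  | zero =>
    have hones : A.map (· ^ 0) = vecMulVec 1 (star 1) := by ext; simp [vecMulVec_apply]
    exact hones ▸ posSemidef_vecMulVec_self_star 1
  | succ n ih =>
    have hsucc : A.map (· ^ (n + 1)) = A.map (· ^ n) ⊙ A := by ext; simp [pow_succ]
    exact hsucc ▸ ih.hadamard hA

theorem posSemidef_iff_sum_mul_nonneg [Fintype ι] {A : Matrix ι ι ℝ} :
    A.PosSemidef ↔ A.IsSymm ∧ ∀ a : ι → ℝ, 0 ≤ ∑ i, ∑ j, a i * a j * A i j := by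
  have hquad (a : ι → ℝ) : star a ⬝ᵥ (A *ᵥ a) = ∑ i, ∑ j, a i * a j * A i j := by
    simp only [dotProduct, mulVec, star_trivial, Finset.mul_sum]
    exact Finset.sum_congr rfl fun i _ => Finset.sum_congr rfl fun j _ => by ring
  simp only [posSemidef_iff_dotProduct_mulVec, isHermitian_iff_isSymm, hquad]

end Matrix

/-- Pointwise powers of a symmetric positive semi-definite real kernel are
symmetric positive semi-definite kernels. -/
theorem kernel_pow_posSemidef {X : Type*} (k : X → X → ℝ)
    (hsymm : ∀ x y, k x y = k y x)
    (hpsd : ∀ (M : ℕ) (x : Fin M → X) (a : Fin M → ℝ),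
      0 ≤ ∑ i, ∑ j, a i * a j * k (x i) (x j))
    (n : ℕ) :
    (∀ x y, k x y ^ n = k y x ^ n) ∧
    (∀ (M : ℕ) (x : Fin M → X) (a : Fin M → ℝ),
      0 ≤ ∑ i, ∑ j, a i * a j * k (x i) (x j) ^ n) := by
  refine ⟨fun x y => by rw [hsymm], fun M x => ?_⟩
  have hgram : (Matrix.of fun i j => k (x i) (x j)).PosSemidef :=
    posSemidef_iff_sum_mul_nonneg.2 ⟨IsSymm.ext fun i j => hsymm _ _, hpsd M x⟩
  exact (posSemidef_iff_sum_mul_nonneg.1 (hgram.map_pow n)).2
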